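/- Let q_n be positive reals with q_0 = 1 such that all quantities T(n,m) = sum_{k=0}^m (-1)^k C(m,k)/q_{n-k} are nonnegative for m <= n. Then every generalized transition probability alpha(n, varpi, m) = q_n * sum_{k=0}^m (-1)^k C(m,k) / q_{varpi - k}, for m <= varpi <= n, lies in the closed interval [0, 1]. -/
import Mathlib


open Finset

/-- `T q n m = ∑_{k=0}^m (-1)^k C(m,k) / q_{n-k}`. -/
noncomputable def T (q : ℕ → ℝ) (n m : ℕ) : ℝ :=
  ∑ k ∈ range (m + 1), (-1 : ℝ) ^ k * (m.choose k) * (1 / q (n - k))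

lemma key (f : ℕ → ℝ) (m : ℕ) :
    ∑ k ∈ range (m + 2), (-1 : ℝ) ^ k * ((m + 1).choose k) * f k
      = (∑ k ∈ range (m + 1), (-1 : ℝ) ^ k * (m.choose k) * f k)
        - ∑ k ∈ range (m + 1), (-1 : ℝ) ^ k * (m.choose k) * f (k + 1) := by
  have h0 : ∑ k ∈ range (m + 1), (-1 : ℝ) ^ k * (m.choose (k + 1)) * f (k + 1)
      = ∑ k ∈ range m, (-1 : ℝ) ^ k * (m.choose (k + 1)) * f (k + 1) := by
    rw [sum_range_succ]; simp
  rw [sum_range_succ' (fun k => (-1 : ℝ) ^ k * ((m + 1).choose k) * f k) (m + 1),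
      sum_range_succ' (fun k => (-1 : ℝ) ^ k * (m.choose k) * f k) m]
  simp only [Nat.choose_succ_succ, Nat.succ_eq_add_one, pow_succ]
  push_cast
  have e1 : ∑ x ∈ range (m + 1), (-1 : ℝ) ^ x * -1 * ((m.choose x : ℝ) + (m.choose (x + 1) : ℝ)) * f (x + 1)
      = ∑ x ∈ range (m + 1),
          (-((-1 : ℝ) ^ x * (m.choose x : ℝ) * f (x + 1)) - (-1 : ℝ) ^ x * (m.choose (x + 1) : ℝ) * f (x + 1)) :=
    sum_congr rfl fun x _ => by ring
  have e2 : ∑ x ∈ range m, (-1 : ℝ) ^ x * -1 * (m.choose (x + 1) : ℝ) * f (x + 1)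
      = -∑ x ∈ range m, (-1 : ℝ) ^ x * (m.choose (x + 1) : ℝ) * f (x + 1) := by
    rw [← sum_neg_distrib]; exact sum_congr rfl fun x _ => by ring
  rw [e1, sum_sub_distrib, sum_neg_distrib, e2, ← h0]
  simp
  ring
lemma Trec (q : ℕ → ℝ) (n m : ℕ) :
    T q n (m + 1) = T q n m - T q (n - 1) m := by
  unfold T
  rw [show m + 1 + 1 = m + 2 from rfl, key (fun k => 1 / q (n - k)) m]
  congr 1
  exact Finset.sum_congr rfl fun k _ => by rw [show n - (k + 1) = n - 1 - k from by omega]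

lemma qanti (q : ℕ → ℝ) (hqpos : ∀ n, 0 < q n)
    (hT : ∀ n m, m ≤ n → 0 ≤ T q n m) : ∀ a b : ℕ, a ≤ b → q b ≤ q a := by
  have step : ∀ n : ℕ, q (n + 1) ≤ q n := by
    intro n
    have h := hT (n + 1) 1 (by omega)
    unfold T at h
    simp [Finset.sum_range_succ] at h
    exact (inv_le_inv₀ (hqpos n) (hqpos (n + 1))).mp h
  intro a b hab
  exact (antitone_nat_of_succ_le step) hab

lemma Tle (q : ℕ → ℝ) (hqpos : ∀ n, 0 < q n)
    (hT : ∀ n m, m ≤ n → 0 ≤ T q n m) :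
    ∀ m n, m ≤ n → T q n m ≤ 1 / q n := by
  intro m
  induction m with
  | zero => intro n _; simp [T]
  | succ m ih =>
    intro n hmn
    rw [Trec]
    have h1 := hT (n - 1) m (by omega)
    have h2 := ih n (by omega)
    linarith

theorem stmt17 (q : ℕ → ℝ) (hq0 : q 0 = 1) (hqpos : ∀ n, 0 < q n)
    (hT : ∀ n m, m ≤ n → 0 ≤ T q n m) :
    ∀ n varpi m, m ≤ varpi → varpi ≤ n →
      q n * (∑ k ∈ range (m + 1), (-1 : ℝ) ^ k * (m.choose k) * (1 / q (varpi - k)))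
        ∈ Set.Icc (0 : ℝ) 1 := by
  intro n varpi m hm hv
  have hTeq : (∑ k ∈ range (m + 1), (-1 : ℝ) ^ k * (m.choose k) * (1 / q (varpi - k)))
      = T q varpi m := rfl
  rw [hTeq]
  constructor
  · exact mul_nonneg (hqpos n).le (hT varpi m hm)
  · have h1 : T q varpi m ≤ 1 / q varpi := Tle q hqpos hT m varpi hm
    have h2 : q n ≤ q varpi := qanti q hqpos hT varpi n hv
    calc q n * T q varpi m ≤ q n * (1 / q varpi) :=
          mul_le_mul_of_nonneg_left h1 (hqpos n).le
      _ ≤ q varpi * (1 / q varpi) :=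
          mul_le_mul_of_nonneg_right h2 (div_pos one_pos (hqpos varpi)).le
      _ = 1 := by rw [mul_one_div, div_self (hqpos varpi).ne']
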